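/- arXiv:1906.06665 — 3 statements merged into one kernel-verified Lean document; each statement's English description precedes it below -/
import Mathlib

section
/- Let M be a compact subset of ℝ^F, let f: M → ℝ be continuous with a unique minimizer μ₀ ∈ M, and let (Ĥ_n) be a sequence of random functions on M such that: (i) Ĥ_n(μ₀) converges in probability to f(μ₀); (ii) there exist random functions L_n with L_n ≤ Ĥ_n pointwise and sup_{μ∈M} |L_n(μ) − f(μ)| → 0 in probability. If μ̂_n ∈ argmin_{μ∈M} Ĥ_n(μ), then μ̂_n converges in probability to μ₀. -/
/-!
Compactness and uniqueness of the minimizer give a gap `ε > 0` with `f μ₀ + ε < f μ`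
whenever `μ ∈ M` is at distance at least `δ` from `μ₀`. Outside the event where `Ĥ_n(μ₀)`
or `L_n` is more than `ε / 2` away from `f`, a minimizer satisfies
`f μ̂_n ≤ L_n μ̂_n + ε/2 ≤ Ĥ_n μ̂_n + ε/2 ≤ Ĥ_n μ₀ + ε/2 ≤ f μ₀ + ε`,
so it lies within `δ` of `μ₀`; that event has vanishing probability by the two convergence
hypotheses.
-/

open MeasureTheory Filter Topology

theorem IsCompact.exists_pos_add_lt_of_unique_min {X : Type*} [PseudoMetricSpace X] {M : Set X}
    (hM : IsCompact M) {f : X → ℝ} (hf : ContinuousOn f M) {x₀ : X} {δ : ℝ} (hδ : 0 < δ)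
    (huniq : ∀ x ∈ M, x ≠ x₀ → f x₀ < f x) :
    ∃ ε > 0, ∀ x ∈ M, δ ≤ dist x x₀ → f x₀ + ε < f x := by
  set K := M ∩ {x | δ ≤ dist x x₀}
  rcases K.eq_empty_or_nonempty with hK | hK
  · refine ⟨1, one_pos, fun x hxM hx => ?_⟩
    exact absurd (show x ∈ K from ⟨hxM, hx⟩) (hK ▸ Set.notMem_empty x)
  have hKc : IsCompact K :=
    hM.inter_right (isClosed_le continuous_const (continuous_id.dist continuous_const))
  obtain ⟨xs, ⟨hxsM, hxs⟩, hmin⟩ := hKc.exists_isMinOn hK (hf.mono Set.inter_subset_left)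
  have hne : xs ≠ x₀ := by
    rintro rfl
    simp only [Set.mem_ofPred_eq, dist_self] at hxs
    linarith
  have hlt := huniq xs hxsM hne
  refine ⟨(f xs - f x₀) / 2, by linarith, fun x hxM hx => ?_⟩
  have : f xs ≤ f x := hmin ⟨hxM, hx⟩
  linarith

theorem tendsto_measure_zero_of_subset_union {ι Ω : Type*} {l : Filter ι}
    {_ : MeasurableSpace Ω} {P : Measure Ω} {s t u : ι → Set Ω} (hs : ∀ i, s i ⊆ t i ∪ u i)
    (ht : Tendsto (fun i => P (t i)) l (𝓝 0)) (hu : Tendsto (fun i => P (u i)) l (𝓝 0)) :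
    Tendsto (fun i => P (s i)) l (𝓝 0) :=
  tendsto_of_tendsto_of_tendsto_of_le_of_le tendsto_const_nhds (by simpa using ht.add hu)
    (fun _ => zero_le) (fun i => (measure_mono (hs i)).trans (measure_union_le _ _))

theorem extremum_estimator_consistency_general
    {Ω : Type*} {mΩ : MeasurableSpace Ω} (P : Measure Ω)
    {F : ℕ} (M : Set (EuclideanSpace ℝ (Fin F))) (hM : IsCompact M)
    (f : EuclideanSpace ℝ (Fin F) → ℝ) (hf : ContinuousOn f M)
    (μ0 : EuclideanSpace ℝ (Fin F)) (hμ0 : μ0 ∈ M)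
    (huniq : ∀ μ ∈ M, μ ≠ μ0 → f μ0 < f μ)
    (H L : ℕ → EuclideanSpace ℝ (Fin F) → Ω → ℝ)
    (hpt : ∀ δ > (0 : ℝ),
      Tendsto (fun n => P {ω | δ < |H n μ0 ω - f μ0|}) atTop (nhds 0))
    (hle : ∀ n, ∀ μ ∈ M, ∀ ω, L n μ ω ≤ H n μ ω)
    (hunif : ∀ δ > (0 : ℝ),
      Tendsto (fun n => P {ω | ∃ μ ∈ M, δ < |L n μ ω - f μ|}) atTop (nhds 0))
    (μhat : ℕ → Ω → EuclideanSpace ℝ (Fin F))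
    (hargmin : ∀ n ω, μhat n ω ∈ M ∧ ∀ μ ∈ M, H n (μhat n ω) ω ≤ H n μ ω) :
    ∀ δ > (0 : ℝ),
      Tendsto (fun n => P {ω | δ < dist (μhat n ω) μ0}) atTop (nhds 0) := by
  intro δ hδ
  obtain ⟨ε, hε, hgap⟩ := hM.exists_pos_add_lt_of_unique_min hf hδ huniq
  have hevent : ∀ n, {ω | δ < dist (μhat n ω) μ0} ⊆
      {ω | ε / 2 < |H n μ0 ω - f μ0|} ∪ {ω | ∃ μ ∈ M, ε / 2 < |L n μ ω - f μ|} := by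
    intro n ω hfar
    by_contra hgood
    simp only [Set.mem_union, Set.mem_ofPred_eq, not_or, not_exists, not_and, not_lt]
      at hgood hfar
    obtain ⟨hHμ0, hL⟩ := hgood
    obtain ⟨hmem, hmin⟩ := hargmin n ω
    have := hgap _ hmem hfar.le
    have := hle n _ hmem ω
    have := hmin μ0 hμ0
    have := (abs_le.mp hHμ0).2
    have := (abs_le.mp (hL _ hmem)).1
    linarith
  exact tendsto_measure_zero_of_subset_union hevent (hpt _ (half_pos hε)) (hunif _ (half_pos hε))

/-- Lower-envelope consistency theorem for extremum estimators: if the random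
criterion `Ĥ_n` converges in probability to `f(μ₀)` at the unique minimizer
`μ₀` of the continuous limit `f` on a compact set `M`, and `Ĥ_n` is bounded
below by random functions `L_n` converging uniformly in probability to `f` on
`M`, then any measurable minimizer `μ̂_n` of `Ĥ_n` over `M` converges in
probability to `μ₀`. -/
theorem extremum_estimator_consistency
    {Ω : Type*} {mΩ : MeasurableSpace Ω} (P : Measure Ω) [IsProbabilityMeasure P]
    {F : ℕ} (M : Set (EuclideanSpace ℝ (Fin F))) (hM : IsCompact M)
    (f : EuclideanSpace ℝ (Fin F) → ℝ) (hf : ContinuousOn f M)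
    (μ0 : EuclideanSpace ℝ (Fin F)) (hμ0 : μ0 ∈ M)
    (huniq : ∀ μ ∈ M, μ ≠ μ0 → f μ0 < f μ)
    (H L : ℕ → EuclideanSpace ℝ (Fin F) → Ω → ℝ)
    (hpt : ∀ δ > (0 : ℝ),
      Tendsto (fun n => P {ω | δ < |H n μ0 ω - f μ0|}) atTop (nhds 0))
    (hle : ∀ n, ∀ μ ∈ M, ∀ ω, L n μ ω ≤ H n μ ω)
    (hunif : ∀ δ > (0 : ℝ),
      Tendsto (fun n => P {ω | ∃ μ ∈ M, δ < |L n μ ω - f μ|}) atTop (nhds 0))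
    (μhat : ℕ → Ω → EuclideanSpace ℝ (Fin F))
    (hargmin : ∀ n ω, μhat n ω ∈ M ∧ ∀ μ ∈ M, H n (μhat n ω) ω ≤ H n μ ω) :
    ∀ δ > (0 : ℝ),
      Tendsto (fun n => P {ω | δ < dist (μhat n ω) μ0}) atTop (nhds 0) :=
  extremum_estimator_consistency_general (mΩ := mΩ) P M hM f hf μ0 hμ0 huniq H L hpt hle hunif μhat
    hargmin
end

section
/- In the one-factor model y_{it} = λ_t + ε_{it} (i = 0,...,J) with λ_t i.i.d. N(0,σ_λ²) and ε_{it} i.i.d. N(0,σ²), all independent, if the OLS coefficient vector b of regressing y₀ on (y₁,...,y_J) over T₀ periods satisfies b'b → c/(1−c) in probability where J/T₀ → c ∈ [0,1), and ∑_i b_i → 1 in probability, then for a post-treatment period t with errors independent of the estimation sample, the estimator α̂ = y₀ₜ − α₀ₜ_adjusted satisfies: conditional on b, ε_{0t} − ε_t'b ∼ N(0, σ²(1 + b'b)), and hence ε_{0t} − ε_t'b converges in distribution to N(0, σ²/(1−c)). -/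
open MeasureTheory ProbabilityTheory Filter

open scoped Topology NNReal BoundedContinuousFunction

/-!
Since `b` is independent of the errors, conditionally on `b = v` the residual
`ε₀ − ε'v` is `N(0, σ²(1 + ‖v‖²))`. Hence `E f(ε₀ − ε'b) = E G(‖b‖²)` with
`G(s) = E f(N(0, σ²(1 + s)))`. Writing `N(0, v)` as the image of `N(0, 1)` under `x ↦ √v x`,
dominated convergence shows that `G` is bounded and continuous, so `‖b‖² → c/(1−c)` in
probability gives `E G(‖b‖²) → G(c/(1−c))`, the expectation under `N(0, σ²/(1−c))`.
-/

lemma Real.sqrt_coe_toNNReal (s : ℝ) : √(s.toNNReal : ℝ) = √s := by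
  unfold Real.sqrt
  rw [Real.toNNReal_coe]

lemma gaussianReal_map_sqrt_mul (v : ℝ≥0) :
    (gaussianReal 0 1).map (fun x => √(v : ℝ) * x) = gaussianReal 0 v := by
  rw [gaussianReal_map_const_mul, mul_zero, mul_one]
  congr 1
  exact NNReal.eq (Real.sq_sqrt v.coe_nonneg)

lemma integral_gaussianReal_eq_integral_sqrt_mul {E : Type*} [NormedAddCommGroup E]
    [NormedSpace ℝ E] {f : ℝ → E} {v : ℝ≥0} (hf : AEStronglyMeasurable f (gaussianReal 0 v)) :
    ∫ x, f x ∂gaussianReal 0 v = ∫ x, f (√(v : ℝ) * x) ∂gaussianReal 0 1 := by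
  rw [← gaussianReal_map_sqrt_mul] at hf ⊢
  exact integral_map (by fun_prop) hf

lemma continuous_integral_gaussianReal_toNNReal (f : ℝ →ᵇ ℝ) :
    Continuous fun s : ℝ => ∫ x, f x ∂gaussianReal 0 s.toNNReal := by
  simp_rw [integral_gaussianReal_eq_integral_sqrt_mul f.continuous.aestronglyMeasurable,
    Real.sqrt_coe_toNNReal]
  exact continuous_of_dominated (fun _ => by fun_prop)
    (fun _ => .of_forall fun _ => f.norm_coe_le_norm _) (integrable_const _)
    (.of_forall fun _ => by fun_prop)

/-- `s ↦ E f(N(0, s))`; negative `s` are truncated to variance `0`. -/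
noncomputable def gaussianExpectation (f : ℝ →ᵇ ℝ) : ℝ →ᵇ ℝ :=
  .ofNormedAddCommGroup _ (continuous_integral_gaussianReal_toNNReal f) ‖f‖ fun s => by
    simpa using norm_integral_le_of_norm_le_const (μ := gaussianReal 0 s.toNNReal)
      (.of_forall fun x => f.norm_coe_le_norm x)

lemma gaussianExpectation_apply (f : ℝ →ᵇ ℝ) (s : ℝ) :
    gaussianExpectation f s = ∫ x, f x ∂gaussianReal 0 s.toNNReal := rfl

section Independence

variable {Ω α β : Type*} {mΩ : MeasurableSpace Ω} {mα : MeasurableSpace α}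
  {mβ : MeasurableSpace β} {P : Measure Ω} [IsFiniteMeasure P]

lemma ProbabilityTheory.IndepFun.integral_comp_prodMk_eq_integral_integral
    {X : Ω → α} {Y : Ω → β} (hXY : IndepFun X Y P) (hX : Measurable X) (hY : Measurable Y)
    {F : α × β → ℝ} (hF : Integrable F ((P.map X).prod (P.map Y))) :
    ∫ ω, F (X ω, Y ω) ∂P = ∫ ω', ∫ ω, F (X ω, Y ω') ∂P ∂P := by
  have hjoint : P.map (fun ω => (X ω, Y ω)) = (P.prod P).map (Prod.map X Y) := by
    rw [← Measure.map_prod_map P P hX hY]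
    exact (indepFun_iff_map_prod_eq_prod_map_map hX.aemeasurable hY.aemeasurable).mp hXY
  rw [Measure.map_prod_map P P hX hY] at hF
  calc ∫ ω, F (X ω, Y ω) ∂P
      = ∫ z, F z ∂(P.prod P).map (Prod.map X Y) := by
        rw [← hjoint, integral_map (by fun_prop) (hjoint ▸ hF.1)]
    _ = ∫ p, F (X p.1, Y p.2) ∂P.prod P := integral_map (by fun_prop) hF.1
    _ = ∫ ω', ∫ ω, F (X ω, Y ω') ∂P ∂P :=
        integral_prod_symm _ (hF.comp_measurable (hX.prodMap hY))

lemma ProbabilityTheory.IndepFun.integral_comp_eq_integral_integral_of_map_eq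
    {X : Ω → α} {Y : Ω → β} (hXY : IndepFun X Y P) (hX : Measurable X) (hY : Measurable Y)
    {φ : α → β → ℝ} (hφ : Measurable (Function.uncurry φ)) {μ : β → Measure ℝ}
    (hμ : ∀ y, P.map (fun ω => φ (X ω) y) = μ y) (f : ℝ →ᵇ ℝ) :
    ∫ ω, f (φ (X ω) (Y ω)) ∂P = ∫ ω, ∫ x, f x ∂μ (Y ω) ∂P := by
  have hF : Integrable (fun z : α × β => f (φ z.1 z.2)) ((P.map X).prod (P.map Y)) :=
    .of_bound (f.continuous.measurable.comp hφ).aestronglyMeasurable ‖f‖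
      (.of_forall fun _ => f.norm_coe_le_norm _)
  rw [hXY.integral_comp_prodMk_eq_integral_integral hX hY hF]
  refine integral_congr_ae (.of_forall fun ω' => ?_)
  have hφX : Measurable fun ω => φ (X ω) (Y ω') := hφ.comp (hX.prodMk measurable_const)
  dsimp only
  rw [← hμ, integral_map hφX.aemeasurable f.continuous.aestronglyMeasurable]

end Independence

lemma tendsto_integral_comp_of_tendstoInMeasure_const {Ω E : Type*} {mΩ : MeasurableSpace Ω}
    {P : Measure Ω} [IsProbabilityMeasure P] [PseudoMetricSpace E] [MeasurableSpace E]
    [BorelSpace E] {S : ℕ → Ω → E} {L : E} (hS : TendstoInMeasure P S atTop fun _ => L)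
    (hS_meas : ∀ n, AEMeasurable (S n) P) (g : E →ᵇ ℝ) :
    Tendsto (fun n => ∫ ω, g (S n ω) ∂P) atTop (𝓝 (g L)) := by
  have h := ProbabilityMeasure.tendsto_iff_forall_integral_tendsto.mp
    (hS.tendstoInDistribution hS_meas).tendsto g
  simpa [integral_map (hS_meas _) g.continuous.aestronglyMeasurable,
    integral_dirac' _ _ g.continuous.stronglyMeasurable] using h

lemma tendstoInMeasure_of_tendsto_measure_lt_abs_sub {Ω : Type*} {mΩ : MeasurableSpace Ω}
    {P : Measure Ω} {S : ℕ → Ω → ℝ} {L : ℝ}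
    (hS : ∀ δ > (0 : ℝ), Tendsto (fun n => P {ω | δ < |S n ω - L|}) atTop (𝓝 0)) :
    TendstoInMeasure P S atTop fun _ => L := by
  refine tendstoInMeasure_iff_dist.mpr fun δ hδ => ?_
  refine tendsto_of_tendsto_of_tendsto_of_le_of_le tendsto_const_nhds (hS (δ / 2) (by positivity))
    (fun _ => zero_le) fun n => measure_mono fun ω (hω : δ ≤ dist (S n ω) L) => ?_
  change δ / 2 < |S n ω - L|
  rw [Real.dist_eq] at hω
  linarith

theorem ols_post_treatment_asymptotic_distribution_general
    {Ω : Type*} {mΩ : MeasurableSpace Ω} (P : Measure Ω) [IsProbabilityMeasure P]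
    (σ2 : NNReal) (c : ℝ) (hc1 : c < 1)
    (J : ℕ → ℕ)
    (b : (n : ℕ) → Ω → Fin (J n) → ℝ)
    (ε0 : Ω → ℝ) (ε : (n : ℕ) → Ω → Fin (J n) → ℝ)
    (hmeas0 : Measurable ε0)
    (hmease : ∀ n, Measurable (ε n))
    (hmeasb : ∀ n, Measurable (b n))
    -- joint Gaussianity: every linear combination of (ε₀, ε_n) is Gaussian
    -- with the variance corresponding to i.i.d. N(0, σ²) coordinates
    (hgauss : ∀ (n : ℕ) (a : ℝ) (v : Fin (J n) → ℝ),
      P.map (fun ω => a * ε0 ω + ∑ j, v j * ε n ω j)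
        = gaussianReal 0 (Real.toNNReal ((a ^ 2 + ∑ j, (v j) ^ 2) * (σ2 : ℝ))))
    -- (ε₀, ε_n) is independent of b_n
    (hindep : ∀ n, IndepFun (fun ω => (ε0 ω, ε n ω)) (b n) P)
    (hb2 : ∀ δ > (0 : ℝ),
      Tendsto (fun n => P {ω | δ < |(∑ j, (b n ω j) ^ 2) - c / (1 - c)|})
        atTop (nhds 0)) :
    (∀ (n : ℕ) (v : Fin (J n) → ℝ),
      P.map (fun ω => ε0 ω - ∑ j, v j * ε n ω j)
        = gaussianReal 0 (Real.toNNReal ((1 + ∑ j, (v j) ^ 2) * (σ2 : ℝ)))) ∧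
      (∀ f : ℝ → ℝ, Continuous f → (∃ Cf, ∀ x, |f x| ≤ Cf) →
        Tendsto
          (fun n => ∫ ω, f (ε0 ω - ∑ j, b n ω j * ε n ω j) ∂P)
          atTop
          (nhds (∫ x, f x ∂(gaussianReal 0 (Real.toNNReal ((σ2 : ℝ) / (1 - c))))))) := by
  have hlaw : ∀ (n : ℕ) (v : Fin (J n) → ℝ), P.map (fun ω => ε0 ω - ∑ j, v j * ε n ω j)
      = gaussianReal 0 (Real.toNNReal ((1 + ∑ j, (v j) ^ 2) * (σ2 : ℝ))) := fun n v => by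
    simpa [sub_eq_add_neg] using hgauss n 1 (-v)
  refine ⟨hlaw, fun f hf ⟨Cf, hCf⟩ => ?_⟩
  let g : ℝ →ᵇ ℝ := .ofNormedAddCommGroup f hf Cf hCf
  let G : ℝ →ᵇ ℝ := (gaussianExpectation g).compContinuous ⟨fun s => (1 + s) * σ2, by fun_prop⟩
  have hcond : ∀ n, ∫ ω, f (ε0 ω - ∑ j, b n ω j * ε n ω j) ∂P
      = ∫ ω, G (∑ j, b n ω j ^ 2) ∂P := fun n =>
    (hindep n).integral_comp_eq_integral_integral_of_map_eq (hmeas0.prodMk (hmease n))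
      (hmeasb n) (φ := fun x v => x.1 - ∑ j, v j * x.2 j) (by fun_prop) (hlaw n) g
  have hG : G (c / (1 - c)) = ∫ x, f x ∂gaussianReal 0 (Real.toNNReal ((σ2 : ℝ) / (1 - c))) := by
    have : (1 + c / (1 - c)) * (σ2 : ℝ) = σ2 / (1 - c) := by
      field_simp [(sub_pos.mpr hc1).ne']
      ring
    simp [G, gaussianExpectation_apply, this, g]
  simp_rw [hcond, ← hG]
  exact tendsto_integral_comp_of_tendstoInMeasure_const
    (tendstoInMeasure_of_tendsto_measure_lt_abs_sub hb2) (fun n => by fun_prop) G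

/-- In the one-factor model with i.i.d. Gaussian errors, if the OLS weights `b`
satisfy `b'b → c/(1−c)` and `∑ᵢ bᵢ → 1` in probability, then (conditionally on
`b`, i.e., for each fixed weight vector `v`) `ε₀ₜ − ε_t'v ∼ N(0, σ²(1 + v'v))`,
and `ε₀ₜ − ε_t'b` converges in distribution to `N(0, σ²/(1−c))`. -/
theorem ols_post_treatment_asymptotic_distribution
    {Ω : Type*} {mΩ : MeasurableSpace Ω} (P : Measure Ω) [IsProbabilityMeasure P]
    (σ2 : NNReal) (c : ℝ) (hc0 : 0 ≤ c) (hc1 : c < 1)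
    (J : ℕ → ℕ)
    (b : (n : ℕ) → Ω → Fin (J n) → ℝ)
    (ε0 : Ω → ℝ) (ε : (n : ℕ) → Ω → Fin (J n) → ℝ)
    (hmeas0 : Measurable ε0)
    (hmease : ∀ n, Measurable (ε n))
    (hmeasb : ∀ n, Measurable (b n))
    -- joint Gaussianity: every linear combination of (ε₀, ε_n) is Gaussian
    -- with the variance corresponding to i.i.d. N(0, σ²) coordinates
    (hgauss : ∀ (n : ℕ) (a : ℝ) (v : Fin (J n) → ℝ),
      P.map (fun ω => a * ε0 ω + ∑ j, v j * ε n ω j)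
        = gaussianReal 0 (Real.toNNReal ((a ^ 2 + ∑ j, (v j) ^ 2) * (σ2 : ℝ))))
    -- (ε₀, ε_n) is independent of b_n
    (hindep : ∀ n, IndepFun (fun ω => (ε0 ω, ε n ω)) (b n) P)
    (hb1 : ∀ δ > (0 : ℝ),
      Tendsto (fun n => P {ω | δ < |(∑ j, b n ω j) - 1|}) atTop (nhds 0))
    (hb2 : ∀ δ > (0 : ℝ),
      Tendsto (fun n => P {ω | δ < |(∑ j, (b n ω j) ^ 2) - c / (1 - c)|})
        atTop (nhds 0)) :
    (∀ (n : ℕ) (v : Fin (J n) → ℝ),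
      P.map (fun ω => ε0 ω - ∑ j, v j * ε n ω j)
        = gaussianReal 0 (Real.toNNReal ((1 + ∑ j, (v j) ^ 2) * (σ2 : ℝ)))) ∧
      (∀ f : ℝ → ℝ, Continuous f → (∃ Cf, ∀ x, |f x| ≤ Cf) →
        Tendsto
          (fun n => ∫ ω, f (ε0 ω - ∑ j, b n ω j * ε n ω j) ∂P)
          atTop
          (nhds (∫ x, f x ∂(gaussianReal 0 (Real.toNNReal ((σ2 : ℝ) / (1 - c))))))) :=
  ols_post_treatment_asymptotic_distribution_general (mΩ := mΩ) P σ2 c hc1 J b ε0 ε hmeas0 hmease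
    hmeasb hgauss hindep hb2
end

section
/- Let ε_t = (ε_{1t},...,ε_{Jt})', t = 1,...,T₀, with the ε_{it} mean-zero, independent across i, satisfying min_{1≤i≤J} T₀^{-1}∑_t ε_{it}² ≥ c > 0 with probability 1−o(1) and max_{i≠j} |T₀^{-1}∑_t ε_{it}ε_{jt}| = o_p(1). If ŵ is a (random) sequence of vectors in the simplex Δ^{J-1} such that T₀^{-1}∑_{t=1}^{T₀} (ε_t'ŵ)² → 0 in probability, then ‖ŵ‖₂ → 0 in probability. -/
/-! Expanding the square, `T₀⁻¹ ∑_t (ε_t'ŵ)² = ∑_{i,j} ŵ_i ŵ_j B_ij` with `B` the empirical Gram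
matrix of the shocks. When the diagonal of `B` is at least `c` and its off-diagonal entries are at
least `-d`, nonnegativity of `ŵ` and `∑ ŵ_i = 1` give `c ‖ŵ‖² ≤ ŵ'Bŵ + d`. With `d = c δ²/2`, the
event `‖ŵ‖ > δ` is thus covered by three events whose probabilities tend to zero. -/

open MeasureTheory ProbabilityTheory Filter Finset

section QuadraticForm

variable {ι κ : Type*} [Fintype ι] [Fintype κ]

theorem sum_sq_sum_mul_eq_sum_sum (e : ι → κ → ℝ) (w : ι → ℝ) :
    ∑ t, (∑ i, e i t * w i) ^ 2 = ∑ i, ∑ j, w i * w j * ∑ t, e i t * e j t := by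
  simp_rw [sq, Fintype.sum_mul_sum, Finset.mul_sum]
  rw [Finset.sum_comm]
  refine Finset.sum_congr rfl fun i _ => ?_
  rw [Finset.sum_comm]
  exact Finset.sum_congr rfl fun j _ => Finset.sum_congr rfl fun t _ => by ring

theorem mul_sum_sq_le_sum_sum_add [DecidableEq ι] (B : ι → ι → ℝ) (w : ι → ℝ)
    (hw : ∀ i, 0 ≤ w i) {c d : ℝ} (hd : 0 ≤ d) (hdiag : ∀ i, c ≤ B i i)
    (hoff : ∀ i j, i ≠ j → -d ≤ B i j) :
    c * ∑ i, w i ^ 2 ≤ ∑ i, ∑ j, w i * w j * B i j + d * (∑ i, w i) ^ 2 := by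
  have hterm : ∀ i j, -(d * (w i * w j)) + (if i = j then (c + d) * w i ^ 2 else 0)
      ≤ w i * w j * B i j := by
    intro i j
    by_cases hij : i = j
    · subst hij
      simp only [if_true]
      nlinarith [mul_le_mul_of_nonneg_left (hdiag i) (sq_nonneg (w i))]
    · simp only [hij, if_false, add_zero]
      nlinarith [mul_le_mul_of_nonneg_left (hoff i j hij) (mul_nonneg (hw i) (hw j))]
  have hsum := Finset.sum_le_sum fun i (_ : i ∈ univ) =>
    Finset.sum_le_sum fun j (_ : j ∈ univ) => hterm i j
  simp only [Finset.sum_add_distrib, Finset.sum_neg_distrib, Finset.sum_ite_eq,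
    Finset.mem_univ, if_true, ← Finset.mul_sum, ← Finset.sum_mul, ← sq] at hsum
  nlinarith [Finset.sum_nonneg fun i (_ : i ∈ univ) => sq_nonneg (w i)]

theorem mul_sum_sq_le_of_simplex (e : ι → κ → ℝ) (w : ι → ℝ) (hw : ∀ i, 0 ≤ w i)
    (hw₁ : ∑ i, w i = 1) {s c d : ℝ} (hd : 0 ≤ d) (hdiag : ∀ i, c ≤ s * ∑ t, e i t ^ 2)
    (hoff : ∀ i j, i ≠ j → |s * ∑ t, e i t * e j t| ≤ d) :
    c * ∑ i, w i ^ 2 ≤ s * ∑ t, (∑ i, e i t * w i) ^ 2 + d := by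
  classical
  have h := mul_sum_sq_le_sum_sum_add (fun i j => s * ∑ t, e i t * e j t) w hw hd
    (fun i => by simpa only [sq] using hdiag i) fun i j hij => (abs_le.mp (hoff i j hij)).1
  rw [hw₁, one_pow, mul_one] at h
  rw [sum_sq_sum_mul_eq_sum_sum, Finset.mul_sum]
  simpa only [Finset.mul_sum, mul_left_comm s] using h

end QuadraticForm

section Probability

variable {Ω α : Type*} {mΩ : MeasurableSpace Ω} {μ : Measure Ω} {l : Filter α}

theorem tendsto_measure_compl_of_tendsto_one [IsProbabilityMeasure μ] {A : α → Set Ω}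
    (hA : ∀ n, MeasurableSet (A n)) (h : Tendsto (fun n => μ (A n)) l (nhds 1)) :
    Tendsto (fun n => μ (A n)ᶜ) l (nhds 0) := by
  simp_rw [prob_compl_eq_one_sub (hA _)]
  simpa using ENNReal.Tendsto.sub tendsto_const_nhds h (Or.inl ENNReal.one_ne_top)

theorem tendsto_measure_union_zero {A B : α → Set Ω} (hA : Tendsto (fun n => μ (A n)) l (nhds 0))
    (hB : Tendsto (fun n => μ (B n)) l (nhds 0)) :
    Tendsto (fun n => μ (A n ∪ B n)) l (nhds 0) :=
  tendsto_of_tendsto_of_tendsto_of_le_of_le tendsto_const_nhds (by simpa using hA.add hB)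
    (fun _ => zero_le) fun _ => measure_union_le _ _

end Probability

theorem simplex_weights_norm_tendsto_zero_general
    {Ω : Type*} {mΩ : MeasurableSpace Ω} (P : Measure Ω) [IsProbabilityMeasure P]
    (J : ℕ → ℕ) (c : ℝ) (hc : 0 < c)
    (eps : (T : ℕ) → Fin (J T) → Fin T → Ω → ℝ)
    (hmeas : ∀ T i t, Measurable (eps T i t))
    (hmin : Tendsto
      (fun T : ℕ => P {ω | ∀ i : Fin (J T), c ≤ (T : ℝ)⁻¹ * ∑ t, (eps T i t ω) ^ 2})
      atTop (nhds 1))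
    (hcross : ∀ δ > (0 : ℝ),
      Tendsto
        (fun T : ℕ => P {ω | ∃ i j : Fin (J T), i ≠ j ∧
          δ < |(T : ℝ)⁻¹ * ∑ t, eps T i t ω * eps T j t ω|})
        atTop (nhds 0))
    (w : (T : ℕ) → Ω → Fin (J T) → ℝ)
    (hw : ∀ T ω, (∀ i, 0 ≤ w T ω i) ∧ ∑ i, w T ω i = 1)
    (hfit : ∀ δ > (0 : ℝ),
      Tendsto
        (fun T : ℕ => P {ω | δ < (T : ℝ)⁻¹ * ∑ t, (∑ i, eps T i t ω * w T ω i) ^ 2})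
        atTop (nhds 0)) :
    ∀ δ > (0 : ℝ),
      Tendsto (fun T : ℕ => P {ω | δ < Real.sqrt (∑ i, (w T ω i) ^ 2)})
        atTop (nhds 0) := by
  intro δ hδ
  set d := c * δ ^ 2 / 2 with hd_def
  have hd : 0 < d := by positivity
  have hsub : ∀ T : ℕ, {ω | δ < Real.sqrt (∑ i, (w T ω i) ^ 2)} ⊆
      {ω | ∀ i : Fin (J T), c ≤ (T : ℝ)⁻¹ * ∑ t, (eps T i t ω) ^ 2}ᶜ ∪
      {ω | ∃ i j : Fin (J T), i ≠ j ∧ d < |(T : ℝ)⁻¹ * ∑ t, eps T i t ω * eps T j t ω|} ∪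
      {ω | d < (T : ℝ)⁻¹ * ∑ t, (∑ i, eps T i t ω * w T ω i) ^ 2} := by
    intro T ω hω
    contrapose! hω
    simp only [Set.mem_union, Set.mem_compl_iff, Set.mem_ofPred_eq, not_or, not_not,
      not_exists, not_and, not_lt] at hω
    obtain ⟨⟨hdiag, hoff⟩, hfitω⟩ := hω
    have hbound := mul_sum_sq_le_of_simplex _ _ (hw T ω).1 (hw T ω).2 hd.le hdiag hoff
    have hsq : c * ∑ i, w T ω i ^ 2 ≤ c * δ ^ 2 := by linarith
    exact not_lt.mpr ((Real.sqrt_le_left hδ.le).mpr (le_of_mul_le_mul_left hsq hc))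
  have hmeasA : ∀ T : ℕ, MeasurableSet
      {ω | ∀ i : Fin (J T), c ≤ (T : ℝ)⁻¹ * ∑ t, (eps T i t ω) ^ 2} := fun T => by
    simp_rw [Set.ofPred_forall]
    exact .iInter fun i => measurableSet_le measurable_const (by fun_prop)
  exact tendsto_of_tendsto_of_tendsto_of_le_of_le tendsto_const_nhds
    (tendsto_measure_union_zero (tendsto_measure_union_zero
      (tendsto_measure_compl_of_tendsto_one hmeasA hmin) (hcross d hd)) (hfit d hd))
    (fun _ => zero_le) fun T => measure_mono (hsub T)

/-- If the idiosyncratic shocks are mean zero and independent across units, the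
minimum time-average of squared shocks is bounded below by `c > 0` with
probability `1 − o(1)`, the maximum cross-product average is `o_p(1)`, and
simplex weights `ŵ` satisfy `T₀⁻¹∑_t (ε_t'ŵ)² → 0` in probability, then
`‖ŵ‖₂ → 0` in probability. -/
theorem simplex_weights_norm_tendsto_zero
    {Ω : Type*} {mΩ : MeasurableSpace Ω} (P : Measure Ω) [IsProbabilityMeasure P]
    (J : ℕ → ℕ) (c : ℝ) (hc : 0 < c)
    (eps : (T : ℕ) → Fin (J T) → Fin T → Ω → ℝ)
    (hmeas : ∀ T i t, Measurable (eps T i t))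
    (hmean : ∀ T i t, ∫ ω, eps T i t ω ∂P = 0)
    (hindep : ∀ T,
      iIndepFun
        (fun (i : Fin (J T)) (ω : Ω) => fun t : Fin T => eps T i t ω) P)
    (hmin : Tendsto
      (fun T : ℕ => P {ω | ∀ i : Fin (J T), c ≤ (T : ℝ)⁻¹ * ∑ t, (eps T i t ω) ^ 2})
      atTop (nhds 1))
    (hcross : ∀ δ > (0 : ℝ),
      Tendsto
        (fun T : ℕ => P {ω | ∃ i j : Fin (J T), i ≠ j ∧
          δ < |(T : ℝ)⁻¹ * ∑ t, eps T i t ω * eps T j t ω|})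
        atTop (nhds 0))
    (w : (T : ℕ) → Ω → Fin (J T) → ℝ)
    (hw : ∀ T ω, (∀ i, 0 ≤ w T ω i) ∧ ∑ i, w T ω i = 1)
    (hfit : ∀ δ > (0 : ℝ),
      Tendsto
        (fun T : ℕ => P {ω | δ < (T : ℝ)⁻¹ * ∑ t, (∑ i, eps T i t ω * w T ω i) ^ 2})
        atTop (nhds 0)) :
    ∀ δ > (0 : ℝ),
      Tendsto (fun T : ℕ => P {ω | δ < Real.sqrt (∑ i, (w T ω i) ^ 2)})
        atTop (nhds 0) :=
  simplex_weights_norm_tendsto_zero_general (mΩ := mΩ) P J c hc eps hmeas hmin hcross w hw hfit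
end
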